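/- arXiv:1603.02658 — 2 statements merged into one kernel-verified Lean document; each statement's English description precedes it below -/
import Mathlib

section
/- Exact preservation of the ground state by the linearly implicit scheme: for every τ with 0 < τ < 8, the function ψ* := (1 − τ/8)^{−1}·η satisfies ψ*(x) = η(x) + τ·( (1/2)·ψ*''(x) + η(x)²·ψ*(x) ) for every x ∈ ℝ, and ψ*/‖ψ*‖_{L²} = η. In other words, if ψ_n = η then the linearly implicit step followed by L² normalization returns ψ_{n+1} = η. -/
/-!
Since `η'' = η/4 - 2η³`, the right-hand side of the implicit step at `A η` equals
`η + (τ/8) A η`, which is `A η` because `A (1 - τ/8) = 1`. The normalization returns `η`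
because `∫ η² = 1`, which follows from `(tanh (x/2) / 2)' = η²`.
-/

open MeasureTheory

/-- The ground state `η(x) = (1/2) sech(x/2)`. -/
noncomputable def eta (x : ℝ) : ℝ := (1/2) * (1 / Real.cosh (x/2))

open Filter Topology Real

namespace Real

theorem hasDerivAt_tanh (x : ℝ) : HasDerivAt tanh (cosh x ^ 2)⁻¹ x := by
  have h := (hasDerivAt_sinh x).div (hasDerivAt_cosh x) (cosh_pos x).ne'
  rw [show tanh = sinh / cosh from funext tanh_eq_sinh_div_cosh]
  refine h.congr_deriv ?_
  rw [← sq, ← sq, cosh_sq_sub_sinh_sq, one_div]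

theorem tanh_sq (x : ℝ) : tanh x ^ 2 = 1 - (cosh x ^ 2)⁻¹ := by
  rw [tanh_eq_sinh_div_cosh, div_pow, sinh_sq]
  field_simp

theorem tanh_eq_one_sub_exp_div (x : ℝ) :
    tanh x = (1 - exp (-(2 * x))) / (1 + exp (-(2 * x))) := by
  have hx : exp (-(2 * x)) = (exp x ^ 2)⁻¹ := by rw [← exp_nat_mul, ← exp_neg]; ring_nf
  rw [tanh_eq, hx, exp_neg]
  field_simp

theorem tendsto_tanh_atTop : Tendsto tanh atTop (𝓝 1) := by
  have h : Tendsto (fun x : ℝ => exp (-(2 * x))) atTop (𝓝 0) :=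
    tendsto_exp_neg_atTop_nhds_zero.comp (tendsto_id.const_mul_atTop two_pos)
  have hlim := ((tendsto_const_nhds (x := (1 : ℝ))).sub h).div
    (tendsto_const_nhds.add h) (by norm_num : (1 : ℝ) + 0 ≠ 0)
  rw [sub_zero, add_zero, div_one] at hlim
  exact hlim.congr fun x => (tanh_eq_one_sub_exp_div x).symm

theorem tendsto_tanh_atBot : Tendsto tanh atBot (𝓝 (-1)) := by
  have h := (tendsto_tanh_atTop.comp tendsto_neg_atBot_atTop).neg
  simpa [Function.comp_def, tanh_neg] using h

end Real

theorem integrable_deriv_of_nonneg_of_tendsto {g g' : ℝ → ℝ} {m n : ℝ}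
    (hderiv : ∀ x, HasDerivAt g (g' x) x) (hg' : ∀ x, 0 ≤ g' x)
    (hbot : Tendsto g atBot (𝓝 m)) (htop : Tendsto g atTop (𝓝 n)) : Integrable g' := by
  have hcont : Continuous g := continuous_iff_continuousAt.2 fun x => (hderiv x).continuousAt
  have hnorm (i : ℝ) : ∫ x in -i..i, ‖g' x‖ = g i - g (-i) := by
    simp_rw [Real.norm_of_nonneg (hg' _)]
    exact intervalIntegral.integral_eq_sub_of_hasDerivAt (fun x _ => hderiv x)
      (intervalIntegral.intervalIntegrable_deriv_of_nonneg hcont.continuousOn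
        (fun x _ => hderiv x) fun x _ => hg' x)
  refine integrable_of_intervalIntegral_norm_tendsto (n - m)
    (fun i => intervalIntegral.integrableOn_deriv_of_nonneg hcont.continuousOn
      (fun x _ => hderiv x) fun x _ => hg' x) tendsto_neg_atTop_atBot tendsto_id ?_
  simpa only [id_eq, hnorm, Function.comp_apply] using htop.sub (hbot.comp tendsto_neg_atTop_atBot)

theorem inv_cosh_half_eq_two_mul_eta (x : ℝ) : (cosh (x / 2))⁻¹ = 2 * eta x := by
  simp only [eta, one_div]
  ring

theorem hasDerivAt_eta (x : ℝ) : HasDerivAt eta (-(eta x * tanh (x / 2)) / 2) x := by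
  have hhalf : HasDerivAt (fun y : ℝ => y / 2) (1 / 2) x := (hasDerivAt_id x).div_const 2
  have h := (((hasDerivAt_cosh (x / 2)).comp x hhalf).inv (cosh_pos (x / 2)).ne').div_const 2
  rw [show eta = fun y => (cosh (y / 2))⁻¹ / 2 by funext y; simp only [eta, one_div]; ring]
  refine h.congr_deriv ?_
  rw [tanh_eq_sinh_div_cosh]
  simp only [Function.comp_def]
  field_simp

theorem deriv_eta : deriv eta = fun x => -(eta x * tanh (x / 2)) / 2 :=
  funext fun x => (hasDerivAt_eta x).deriv

theorem hasDerivAt_deriv_eta (x : ℝ) : HasDerivAt (deriv eta) (eta x / 4 - 2 * eta x ^ 3) x := by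
  have hhalf : HasDerivAt (fun y : ℝ => y / 2) (1 / 2) x := (hasDerivAt_id x).div_const 2
  have h := (((hasDerivAt_eta x).mul ((hasDerivAt_tanh (x / 2)).comp x hhalf)).neg).div_const 2
  rw [deriv_eta]
  refine h.congr_deriv ?_
  have htanh := Real.tanh_sq (x / 2)
  rw [← inv_pow, inv_cosh_half_eq_two_mul_eta] at htanh ⊢
  simp only [Function.comp_apply]
  linear_combination (eta x / 4) * htanh

theorem ground_state_equation (x : ℝ) :
    -(1 / 2) * deriv (deriv eta) x - eta x ^ 3 = -(1 / 8) * eta x := by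
  rw [(hasDerivAt_deriv_eta x).deriv]
  ring

theorem hasDerivAt_half_tanh_half (x : ℝ) :
    HasDerivAt (fun y => tanh (y / 2) / 2) (eta x ^ 2) x := by
  have hhalf : HasDerivAt (fun y : ℝ => y / 2) (1 / 2) x := (hasDerivAt_id x).div_const 2
  refine (((hasDerivAt_tanh (x / 2)).comp x hhalf).div_const 2).congr_deriv ?_
  rw [← inv_pow, inv_cosh_half_eq_two_mul_eta]
  ring

theorem integral_eta_sq : ∫ x, eta x ^ 2 = 1 := by
  have hbot : Tendsto (fun y => tanh (y / 2) / 2) atBot (𝓝 (-1 / 2)) :=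
    (tendsto_tanh_atBot.comp (tendsto_id.atBot_div_const two_pos)).div_const 2
  have htop : Tendsto (fun y => tanh (y / 2) / 2) atTop (𝓝 (1 / 2)) :=
    (tendsto_tanh_atTop.comp (tendsto_id.atTop_div_const two_pos)).div_const 2
  rw [integral_of_hasDerivAt_of_tendsto hasDerivAt_half_tanh_half
    (integrable_deriv_of_nonneg_of_tendsto hasDerivAt_half_tanh_half (fun x => sq_nonneg _)
      hbot htop) hbot htop]
  norm_num

theorem const_mul_div_sqrt_integral_sq {α : Type*} [MeasurableSpace α] {μ : Measure α}
    {f : α → ℝ} {c : ℝ} (hc : 0 < c) (hf : ∫ x, f x ^ 2 ∂μ = 1) :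
    (fun x => c * f x / √(∫ y, (c * f y) ^ 2 ∂μ)) = f := by
  simp_rw [mul_pow, integral_const_mul, hf, mul_one, sqrt_sq hc.le]
  funext x
  field_simp

theorem implicit_scheme_preserves_ground_state_general (τ : ℝ) (hτ : τ < 8) :
    (∀ x : ℝ, (1 - τ/8)⁻¹ * eta x =
      eta x + τ * ((1/2) * deriv (deriv (fun y => (1 - τ/8)⁻¹ * eta y)) x +
        (eta x)^2 * ((1 - τ/8)⁻¹ * eta x))) ∧
    (fun x => (1 - τ/8)⁻¹ * eta x /
        Real.sqrt (∫ y : ℝ, ((1 - τ/8)⁻¹ * eta y)^2)) = eta := by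
  have hpos : 0 < 1 - τ / 8 := by linarith
  refine ⟨fun x => ?_, const_mul_div_sqrt_integral_sq (inv_pos.2 hpos) integral_eta_sq⟩
  simp only [deriv_const_mul_field']
  have hinv : (1 - τ / 8)⁻¹ * (1 - τ / 8) = 1 := inv_mul_cancel₀ hpos.ne'
  linear_combination (τ * (1 - τ / 8)⁻¹) * ground_state_equation x + eta x * hinv

/-- exact preservation of the ground state by the linearly implicit scheme:
for `0 < τ < 8`, the function `ψ* = (1 − τ/8)⁻¹ η` solves the linearly implicit step with
data `η`, and its `L²` normalization is `η` again. -/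
theorem implicit_scheme_preserves_ground_state (τ : ℝ) (hτ0 : 0 < τ) (hτ : τ < 8) :
    (∀ x : ℝ, (1 - τ/8)⁻¹ * eta x =
      eta x + τ * ((1/2) * deriv (deriv (fun y => (1 - τ/8)⁻¹ * eta y)) x +
        (eta x)^2 * ((1 - τ/8)⁻¹ * eta x))) ∧
    (fun x => (1 - τ/8)⁻¹ * eta x /
        Real.sqrt (∫ y : ℝ, ((1 - τ/8)⁻¹ * eta y)^2)) = eta :=
  implicit_scheme_preserves_ground_state_general τ hτ
end

section
/- Abstract one-step contraction estimate (key inequality in the proof of Theorem 4.2): let H be a real inner product space, c > 0, τ > 0, and let A : H → H be a linear map that is symmetric (⟨Au, v⟩ = ⟨u, Av⟩ for all u, v), positive semidefinite (⟨Au, u⟩ ≥ 0 for all u), and satisfies ‖Au‖² ≥ c·⟨Au, u⟩ for all u. If v, w, v' ∈ H satisfy v' = v − τ·A v' + τ·w, then ⟨A(v + τw), v + τw⟩ ≥ (1 + 2cτ)·⟨Av', v'⟩. -/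
open scoped RealInnerProductSpace

/-- abstract one-step contraction estimate (key inequality in the proof of
Theorem 4.2): if `A` is symmetric, positive semidefinite with `‖Au‖² ≥ c⟨Au,u⟩`, and
`v' = v − τAv' + τw`, then `⟨A(v + τw), v + τw⟩ ≥ (1 + 2cτ)⟨Av', v'⟩`. -/
theorem one_step_contraction {H : Type*} [NormedAddCommGroup H] [InnerProductSpace ℝ H]
    (c τ : ℝ) (hc : 0 < c) (hτ : 0 < τ) (A : H →ₗ[ℝ] H)
    (hsym : ∀ u v : H, ⟪A u, v⟫ = ⟪u, A v⟫)
    (hpsd : ∀ u : H, 0 ≤ ⟪A u, u⟫)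
    (hcoer : ∀ u : H, c * ⟪A u, u⟫ ≤ ‖A u‖^2)
    (v w v' : H) (hrec : v' = v - τ • A v' + τ • w) :
    (1 + 2 * c * τ) * ⟪A v', v'⟫ ≤ ⟪A (v + τ • w), v + τ • w⟫ := by
  have hu : v + τ • w = v' + τ • A v' := by
    set a := A v' with ha
    rw [hrec]; abel
  rw [hu]
  have hsym' : ⟪A (A v'), v'⟫ = ‖A v'‖ ^ 2 := by
    rw [hsym, real_inner_comm, real_inner_self_eq_norm_sq]
  have hexp : ⟪A (v' + τ • A v'), v' + τ • A v'⟫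
      = ⟪A v', v'⟫ + 2 * τ * ‖A v'‖ ^ 2 + τ ^ 2 * ⟪A (A v'), A v'⟫ := by
    simp only [map_add, map_smul, inner_add_left, inner_add_right,
      real_inner_smul_left, real_inner_smul_right, hsym']
    have : ⟪A v', A v'⟫ = ‖A v'‖ ^ 2 := real_inner_self_eq_norm_sq _
    rw [this]; ring
  rw [hexp]
  nlinarith [hpsd (A v'), hcoer v', hpsd v', sq_nonneg τ]
end
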